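/- arXiv:0710.1898 — 9 statements merged into one kernel-verified Lean document; each statement's English description precedes it below -/
import Mathlib

section
/- Let (B, W, E, b, w) be a finite bipartite multigraph in which B and W are nonempty and every vertex is incident to at least one edge. Then the multigraph is non-degenerate (every edge belongs to some perfect matching) if and only if it admits an R-charge (a function R : E → ℝ with R(e) > 0 for all e ∈ E and Σ_{e incident to v} R(e) = 2 for every vertex v ∈ B ∪ W). -/
open Finset
open scoped Classical

/-- A perfect matching in a finite bipartite multigraph with black vertices `B`,
white vertices `W`, edges `E` and endpoint maps `b : E → B`, `w : E → W`:
a set of edges `D` such that every black vertex and every white vertex is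
incident to exactly one edge of `D`. -/
def IsPerfectMatching {B W E : Type*} (b : E → B) (w : E → W) (D : Finset E) : Prop :=
  (∀ v : B, ∃! e : E, e ∈ D ∧ b e = v) ∧ (∀ v : W, ∃! e : E, e ∈ D ∧ w e = v)

private lemma card_filter_eq_one_of_existsUnique {E : Type*} [Fintype E] {p : E → Prop}
    [DecidablePred p] (h : ∃! e, p e) : (univ.filter p).card = 1 := by
  obtain ⟨e, he, hu⟩ := h
  rw [Finset.card_eq_one]
  refine ⟨e, ?_⟩
  ext x
  simp only [mem_filter, mem_univ, true_and, mem_singleton]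
  exact ⟨fun hx => hu x hx, fun hx => hx ▸ he⟩

/-- A finite bipartite multigraph with `B`, `W` nonempty and every vertex incident to
at least one edge is non-degenerate (every edge lies in a perfect matching) if and only
if it admits an R-charge: positive real weights on the edges summing to `2` at every
vertex. -/
theorem nondegenerate_iff_exists_Rcharge
    {B W E : Type*} [Fintype B] [Fintype W] [Fintype E]
    [Nonempty B] [Nonempty W]
    (b : E → B) (w : E → W)
    (hb : ∀ v : B, ∃ e : E, b e = v) (hw : ∀ v : W, ∃ e : E, w e = v) :
    (∀ e : E, ∃ D : Finset E, IsPerfectMatching b w D ∧ e ∈ D) ↔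
      (∃ R : E → ℝ, (∀ e : E, 0 < R e) ∧
        (∀ v : B, ∑ e ∈ univ.filter (fun e => b e = v), R e = 2) ∧
        (∀ v : W, ∑ e ∈ univ.filter (fun e => w e = v), R e = 2)) := by
  have hEne : Nonempty E := by
    obtain ⟨v⟩ := ‹Nonempty B›
    obtain ⟨e, _⟩ := hb v
    exact ⟨e⟩
  have hEpos : (0 : ℝ) < (Fintype.card E : ℝ) := by
    exact_mod_cast Fintype.card_pos_iff.mpr hEne
  constructor
  · -- forward: non-degenerate → R-charge
    intro h
    choose D hD hmem using h
    set N : ℝ := (Fintype.card E : ℝ) with hN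
    refine ⟨fun f => 2 * ((univ.filter (fun e => f ∈ D e)).card : ℝ) / N, ?_, ?_, ?_⟩
    · intro f
      have hfne : (univ.filter (fun e => f ∈ D e)).Nonempty :=
        ⟨f, by simp [hmem f]⟩
      have : 0 < (univ.filter (fun e => f ∈ D e)).card := Finset.card_pos.mpr hfne
      have : (0 : ℝ) < ((univ.filter (fun e => f ∈ D e)).card : ℝ) := by exact_mod_cast this
      positivity
    · intro v
      have key : ∑ f ∈ univ.filter (fun f => b f = v),
          (univ.filter (fun e => f ∈ D e)).card = Fintype.card E := by
        calc ∑ f ∈ univ.filter (fun f => b f = v), (univ.filter (fun e => f ∈ D e)).card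
            = ∑ f ∈ univ.filter (fun f => b f = v), ∑ e ∈ univ, if f ∈ D e then 1 else 0 :=
              Finset.sum_congr rfl (fun f _ => Finset.card_filter _ _)
          _ = ∑ e ∈ univ, ∑ f ∈ univ.filter (fun f => b f = v), if f ∈ D e then 1 else 0 :=
              Finset.sum_comm
          _ = ∑ e ∈ univ, ((univ.filter (fun f => b f = v ∧ f ∈ D e)).card) := by
              refine Finset.sum_congr rfl fun e _ => ?_
              rw [Finset.card_filter]
              rw [Finset.sum_filter]
              refine Finset.sum_congr rfl fun f _ => ?_
              by_cases h1 : b f = v <;> by_cases h2 : f ∈ D e <;> simp [h1, h2]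
          _ = ∑ e ∈ univ, 1 := by
              refine Finset.sum_congr rfl fun e _ => ?_
              refine card_filter_eq_one_of_existsUnique ?_
              obtain ⟨f, ⟨hf1, hf2⟩, hu⟩ := (hD e).1 v
              exact ⟨f, ⟨hf2, hf1⟩, fun x hx => hu x ⟨hx.2, hx.1⟩⟩
          _ = Fintype.card E := by simp
      rw [← Finset.sum_div, ← Finset.mul_sum]
      rw [← Nat.cast_sum, key, hN]
      field_simp
    · intro v
      have key : ∑ f ∈ univ.filter (fun f => w f = v),
          (univ.filter (fun e => f ∈ D e)).card = Fintype.card E := by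
        calc ∑ f ∈ univ.filter (fun f => w f = v), (univ.filter (fun e => f ∈ D e)).card
            = ∑ f ∈ univ.filter (fun f => w f = v), ∑ e ∈ univ, if f ∈ D e then 1 else 0 :=
              Finset.sum_congr rfl (fun f _ => Finset.card_filter _ _)
          _ = ∑ e ∈ univ, ∑ f ∈ univ.filter (fun f => w f = v), if f ∈ D e then 1 else 0 :=
              Finset.sum_comm
          _ = ∑ e ∈ univ, ((univ.filter (fun f => w f = v ∧ f ∈ D e)).card) := by
              refine Finset.sum_congr rfl fun e _ => ?_
              rw [Finset.card_filter]
              rw [Finset.sum_filter]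
              refine Finset.sum_congr rfl fun f _ => ?_
              by_cases h1 : w f = v <;> by_cases h2 : f ∈ D e <;> simp [h1, h2]
          _ = ∑ e ∈ univ, 1 := by
              refine Finset.sum_congr rfl fun e _ => ?_
              refine card_filter_eq_one_of_existsUnique ?_
              obtain ⟨f, ⟨hf1, hf2⟩, hu⟩ := (hD e).2 v
              exact ⟨f, ⟨hf2, hf1⟩, fun x hx => hu x ⟨hx.2, hx.1⟩⟩
          _ = Fintype.card E := by simp
      rw [← Finset.sum_div, ← Finset.mul_sum]
      rw [← Nat.cast_sum, key, hN]
      field_simp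
  · -- backward: R-charge → non-degenerate
    rintro ⟨R, hpos, hRB, hRW⟩ e0
    -- total weight and |B| = |W|
    have hfibB : ∀ (S : Finset B),
        ∑ e ∈ univ.filter (fun e => b e ∈ S), R e = 2 * S.card := by
      intro S
      rw [← Finset.sum_fiberwise_eq_sum_filter univ S b R]
      rw [Finset.sum_congr rfl (fun v _ => hRB v)]
      simp [mul_comm]
    have hfibW : ∀ (T : Finset W),
        ∑ e ∈ univ.filter (fun e => w e ∈ T), R e = 2 * T.card := by
      intro T
      rw [← Finset.sum_fiberwise_eq_sum_filter univ T w R]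
      rw [Finset.sum_congr rfl (fun v _ => hRW v)]
      simp [mul_comm]
    have hcardBW : Fintype.card B = Fintype.card W := by
      have h1 := hfibB univ
      have h2 := hfibW univ
      simp only [Finset.mem_univ, Finset.filter_true, Finset.card_univ] at h1 h2
      have : (Fintype.card B : ℝ) = (Fintype.card W : ℝ) := by
        have := h1.symm.trans h2
        linarith
      exact_mod_cast this
    -- Hall setup on B \ {b e0}
    set ι := {v : B // v ≠ b e0}
    set t : ι → Finset W :=
      fun v => univ.filter (fun u => u ≠ w e0 ∧ ∃ e, b e = v.1 ∧ w e = u) with ht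
    have hall : ∀ s : Finset ι, s.card ≤ (s.biUnion t).card := by
      intro s
      set S : Finset B := s.image Subtype.val with hS
      have hScard : S.card = s.card := Finset.card_image_of_injective s Subtype.val_injective
      have hbe0S : b e0 ∉ S := by
        simp only [hS, Finset.mem_image]
        rintro ⟨v, _, hv⟩
        exact v.2 hv
      set T : Finset W := s.biUnion t with hT
      -- the set of edges out of S
      set F : Finset E := univ.filter (fun e => b e ∈ S) with hF
      set G : Finset E := univ.filter (fun e => w e ∈ insert (w e0) T) with hG
      have he0G : e0 ∈ G := by simp [hG]
      have hsub : F ⊆ G.erase e0 := by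
        intro e he
        have hbe : b e ∈ S := (Finset.mem_filter.mp he).2
        have hene0 : e ≠ e0 := fun h => hbe0S (h ▸ hbe)
        refine Finset.mem_erase.mpr ⟨hene0, ?_⟩
        simp only [hG, Finset.mem_filter, Finset.mem_univ, true_and]
        by_cases hwe : w e = w e0
        · exact hwe ▸ Finset.mem_insert_self _ _
        · refine Finset.mem_insert_of_mem ?_
          obtain ⟨v, hvs, hveq⟩ := Finset.mem_image.mp hbe
          refine Finset.mem_biUnion.mpr ⟨v, hvs, ?_⟩
          simp only [ht, Finset.mem_filter, Finset.mem_univ, true_and]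
          exact ⟨hwe, e, hveq.symm, rfl⟩
      have hFsum : ∑ e ∈ F, R e = 2 * S.card := hfibB S
      have hGsum : ∑ e ∈ G, R e = 2 * (insert (w e0) T).card := hfibW _
      have hle : ∑ e ∈ F, R e ≤ ∑ e ∈ G.erase e0, R e :=
        Finset.sum_le_sum_of_subset_of_nonneg hsub (fun e _ _ => (hpos e).le)
      have herase : ∑ e ∈ G.erase e0, R e = ∑ e ∈ G, R e - R e0 := by
        have := Finset.sum_erase_add G R he0G
        linarith
      have hcardins : ((insert (w e0) T).card : ℝ) ≤ (T.card : ℝ) + 1 := by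
        have := Finset.card_insert_le (w e0) T
        exact_mod_cast this
      have hpose0 := hpos e0
      have hlt : (S.card : ℝ) < (T.card : ℝ) + 1 := by
        nlinarith
      have hfin : S.card < T.card + 1 := by exact_mod_cast hlt
      calc s.card = S.card := hScard.symm
        _ ≤ T.card := by omega
    obtain ⟨f, hfinj, hft⟩ :=
      (Finset.all_card_le_biUnion_card_iff_existsInjective' t).mp hall
    have hft' : ∀ v : ι, f v ≠ w e0 ∧ ∃ e, b e = v.1 ∧ w e = f v := by
      intro v
      have := hft v
      simpa only [ht, Finset.mem_filter, Finset.mem_univ, true_and] using this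
    choose g hg1 hg2 using fun v => (hft' v).2
    have hfne0 : ∀ v : ι, f v ≠ w e0 := fun v => (hft' v).1
    set D : Finset E := insert e0 ((univ : Finset ι).image g) with hDdef
    have he0D : e0 ∈ D := Finset.mem_insert_self _ _
    have hmemD : ∀ e ∈ D, e = e0 ∨ ∃ v : ι, g v = e := by
      intro e he
      rcases Finset.mem_insert.mp he with h | h
      · exact Or.inl h
      · obtain ⟨v, _, hv⟩ := Finset.mem_image.mp h
        exact Or.inr ⟨v, hv⟩
    have hcardι : Fintype.card ι = Fintype.card B - 1 := by
      simp [ι, Fintype.card_subtype_compl]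
    -- image of f is all of W minus w e0
    have himg : (univ : Finset ι).image f = Finset.univ.erase (w e0) := by
      apply Finset.eq_of_subset_of_card_le
      · intro u hu
        obtain ⟨v, _, hv⟩ := Finset.mem_image.mp hu
        exact Finset.mem_erase.mpr ⟨hv ▸ hfne0 v, Finset.mem_univ u⟩
      · rw [Finset.card_erase_of_mem (Finset.mem_univ _),
          Finset.card_image_of_injective _ hfinj, Finset.card_univ, Finset.card_univ,
          hcardι, hcardBW]
    refine ⟨D, ⟨?_, ?_⟩, he0D⟩
    · -- black vertices
      intro v0
      by_cases hv : v0 = b e0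
      · refine ⟨e0, ⟨he0D, hv.symm⟩, ?_⟩
        rintro e ⟨heD, hbe⟩
        rcases hmemD e heD with h | ⟨v, hv'⟩
        · exact h
        · rw [← hv'] at hbe
          exact absurd (((hg1 v).symm.trans hbe).trans hv) v.2
      · refine ⟨g ⟨v0, hv⟩, ⟨?_, hg1 _⟩, ?_⟩
        · exact Finset.mem_insert_of_mem (Finset.mem_image_of_mem g (Finset.mem_univ _))
        · rintro e ⟨heD, hbe⟩
          rcases hmemD e heD with h | ⟨v, hv'⟩
          · exact absurd (h ▸ hbe).symm hv
          · have : v = ⟨v0, hv⟩ := Subtype.ext (by rw [← hg1 v, hv', hbe])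
            rw [← hv', this]
    · -- white vertices
      intro u0
      by_cases hu : u0 = w e0
      · refine ⟨e0, ⟨he0D, hu.symm⟩, ?_⟩
        rintro e ⟨heD, hwe⟩
        rcases hmemD e heD with h | ⟨v, hv'⟩
        · exact h
        · exact absurd (by rw [← hv', hg2 v] at hwe; rw [hwe, hu]) (hfne0 v)
      · have hu0 : u0 ∈ (univ : Finset ι).image f := by
          rw [himg]; exact Finset.mem_erase.mpr ⟨hu, Finset.mem_univ _⟩
        obtain ⟨v, _, hfv⟩ := Finset.mem_image.mp hu0
        refine ⟨g v, ⟨?_, by rw [hg2 v, hfv]⟩, ?_⟩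
        · exact Finset.mem_insert_of_mem (Finset.mem_image_of_mem g (Finset.mem_univ _))
        · rintro e ⟨heD, hwe⟩
          rcases hmemD e heD with h | ⟨v', hv'⟩
          · exact absurd (h ▸ hwe).symm hu
          · have : f v' = f v := by rw [← hg2 v', hv', hwe, hfv]
            rw [← hv', hfinj this]
end

section
/- Let (B, W, E, b, w) be a finite bipartite multigraph with E nonempty which is non-degenerate (every edge belongs to some perfect matching); let Perf denote the (nonempty, finite) set of its perfect matchings. Then the function R : E → ℝ defined by R(e) = (2/|Perf|) · Σ_{D ∈ Perf} χ_D(e), where χ_D is the characteristic function of D ⊆ E, is an R-charge: R(e) > 0 for every edge e, and Σ_{e incident to v} R(e) = 2 for every vertex v ∈ B ∪ W. -/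
open Finset
open scoped Classical

lemma sum_indicator_unique {E V : Type*} [Fintype E] (f : E → V) (v : V) (D : Finset E)
    (h : ∃! e : E, e ∈ D ∧ f e = v) :
    ∑ e ∈ univ.filter (fun e => f e = v), (if e ∈ D then (1 : ℝ) else 0) = 1 := by
  obtain ⟨e₀, ⟨he₀D, he₀v⟩, huniq⟩ := h
  have hfilter : (univ.filter (fun e => f e = v)).filter (fun e => e ∈ D) = {e₀} := by
    ext e
    simp only [mem_filter, mem_univ, true_and, mem_singleton]
    constructor
    · rintro ⟨hv, hD⟩; exact huniq e ⟨hD, hv⟩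
    · rintro rfl; exact ⟨he₀v, he₀D⟩
  rw [Finset.sum_boole, hfilter, Finset.card_singleton, Nat.cast_one]

/-- For a non-degenerate finite bipartite multigraph (with at least one edge), the
averaged function `R(e) = (2/|Perf|) · Σ_{D ∈ Perf} χ_D(e)` over the set `Perf` of
perfect matchings is an R-charge: it is positive on every edge and sums to `2` at
every vertex. -/
theorem average_of_perfect_matchings_is_Rcharge
    {B W E : Type*} [Fintype B] [Fintype W] [Fintype E] [Nonempty E]
    (b : E → B) (w : E → W)
    (hnd : ∀ e : E, ∃ D : Finset E, IsPerfectMatching b w D ∧ e ∈ D) :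
    let Perf : Finset (Finset E) := univ.filter (IsPerfectMatching b w)
    let R : E → ℝ := fun e =>
      (2 / (Perf.card : ℝ)) * ∑ D ∈ Perf, (if e ∈ D then (1 : ℝ) else 0)
    (∀ e : E, 0 < R e) ∧
      (∀ v : B, ∑ e ∈ univ.filter (fun e => b e = v), R e = 2) ∧
      (∀ v : W, ∑ e ∈ univ.filter (fun e => w e = v), R e = 2) := by
  intro Perf R
  have hne : Perf.Nonempty := by
    obtain ⟨D, hD, _⟩ := hnd (Classical.arbitrary E)
    exact ⟨D, mem_filter.2 ⟨mem_univ _, hD⟩⟩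
  have hcard : (0 : ℝ) < (Perf.card : ℝ) := by exact_mod_cast card_pos.2 hne
  have hcoef : (0 : ℝ) < 2 / (Perf.card : ℝ) := by positivity
  refine ⟨?_, ?_, ?_⟩
  · intro e
    obtain ⟨D, hD, heD⟩ := hnd e
    refine mul_pos hcoef (Finset.sum_pos' (fun D _ => by positivity) ?_)
    exact ⟨D, mem_filter.2 ⟨mem_univ _, hD⟩, by simp [heD]⟩
  · intro v
    rw [← Finset.mul_sum, Finset.sum_comm]
    have h : ∀ D ∈ Perf, ∑ e ∈ univ.filter (fun e => b e = v),
        (if e ∈ D then (1 : ℝ) else 0) = 1 := fun D hD =>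
      sum_indicator_unique b v D ((mem_filter.1 hD).2.1 v)
    rw [Finset.sum_congr rfl h, Finset.sum_const, nsmul_eq_mul, mul_one]
    field_simp
  · intro v
    rw [← Finset.mul_sum, Finset.sum_comm]
    have h : ∀ D ∈ Perf, ∑ e ∈ univ.filter (fun e => w e = v),
        (if e ∈ D then (1 : ℝ) else 0) = 1 := fun D hD =>
      sum_indicator_unique w v D ((mem_filter.1 hD).2.2 v)
    rw [Finset.sum_congr rfl h, Finset.sum_const, nsmul_eq_mul, mul_one]
    field_simp
end

section
/- Let n be a nonempty finite type and let M be a doubly stochastic real n × n matrix. If M i j > 0 for some indices i, j, then there exists a permutation σ of n with σ(i) = j and M k (σ(k)) > 0 for every k. -/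
open Finset

/-- Birkhoff–von Neumann consequence: if `M` is a doubly stochastic real matrix on a
nonempty finite index type and `M i j > 0`, then there is a permutation `σ` with
`σ i = j` whose graph is supported on positive entries of `M`. -/
theorem doublyStochastic_pos_entry_mem_perm
    {n : Type*} [Fintype n] [DecidableEq n] [Nonempty n]
    (M : Matrix n n ℝ)
    (hpos : ∀ i j, 0 ≤ M i j)
    (hrow : ∀ i, ∑ j, M i j = 1)
    (hcol : ∀ j, ∑ i, M i j = 1)
    (i j : n) (hij : 0 < M i j) :
    ∃ σ : Equiv.Perm n, σ i = j ∧ ∀ k, 0 < M k (σ k) := by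
  have hM : M ∈ doublyStochastic ℝ n := by
    rw [mem_doublyStochastic_iff_sum]
    exact ⟨fun a b => hpos a b, hrow, hcol⟩
  obtain ⟨w, hw0, hw1, hwM⟩ := exists_eq_sum_perm_of_mem_doublyStochastic hM
  have hentry : ∀ a b, M a b = ∑ σ : Equiv.Perm n, w σ * (σ.permMatrix ℝ) a b := by
    intro a b
    rw [← hwM]
    simp [Finset.sum_apply, Matrix.sum_apply]
  have hterm : ∀ (σ : Equiv.Perm n) (a b : n), 0 ≤ w σ * (σ.permMatrix ℝ) a b := by
    intro σ a b
    refine mul_nonneg (hw0 σ) ?_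
    simp [Equiv.Perm.permMatrix, PEquiv.toMatrix_apply, Equiv.toPEquiv_apply]
    split <;> norm_num
  have : ∃ σ : Equiv.Perm n, 0 < w σ * (σ.permMatrix ℝ) i j := by
    by_contra h
    push_neg at h
    have : M i j ≤ 0 := by
      rw [hentry i j]
      exact Finset.sum_nonpos fun σ _ => h σ
    linarith
  obtain ⟨σ, hσ⟩ := this
  have hPij : (σ.permMatrix ℝ) i j ≠ 0 := by
    intro h0; rw [h0, mul_zero] at hσ; exact lt_irrefl 0 hσ
  have hσij : σ i = j := by
    by_contra hne
    apply hPij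
    simp [Equiv.Perm.permMatrix, PEquiv.toMatrix_apply, Equiv.toPEquiv_apply, hne]
  have hwσ : 0 < w σ := by
    rcases lt_or_eq_of_le (hw0 σ) with h | h
    · exact h
    · exfalso; rw [← h, zero_mul] at hσ; exact lt_irrefl 0 hσ
  refine ⟨σ, hσij, fun k => ?_⟩
  have hdiag : w σ * (σ.permMatrix ℝ) k (σ k) = w σ := by
    simp [Equiv.Perm.permMatrix, PEquiv.toMatrix_apply, Equiv.toPEquiv_apply]
  calc (0:ℝ) < w σ := hwσ
    _ = w σ * (σ.permMatrix ℝ) k (σ k) := hdiag.symm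
    _ ≤ ∑ τ : Equiv.Perm n, w τ * (τ.permMatrix ℝ) k (σ k) :=
        Finset.single_le_sum (fun τ _ => hterm τ k (σ k)) (Finset.mem_univ σ)
    _ = M k (σ k) := (hentry k (σ k)).symm
end

section
/- Let (B, W, E, b, w) be a finite bipartite multigraph with B and W nonempty which satisfies the strong marriage condition. Then the multigraph is non-degenerate: every edge e ∈ E belongs to some perfect matching. -/
open Finset
open scoped Classical

/-! Fix the edge `e` from `x₀` to `y₀`. Deleting `x₀` and `y₀` costs every set of
black vertices avoiding `x₀` at most one neighbour, so the strong marriage condition on the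
black side leaves Hall's condition for the remaining graph; Hall's theorem matches all black
vertices other than `x₀` into white vertices other than `y₀`, and `e` completes this to an
injection `B → W` along edges. The strong condition on the white side gives `|W| ≤ |B|`, so the
injection is a bijection, i.e. a perfect matching. -/

theorem card_le_card_of_forall_card_lt {α β : Type*} [Fintype α] [Fintype β]
    [Nonempty α] [Nonempty β] (N : Finset α → Finset β)
    (h : ∀ S : Finset α, S.Nonempty → S ≠ univ → #S < #(N S)) :
    Fintype.card α ≤ Fintype.card β := by
  obtain ⟨a⟩ := ‹Nonempty α›
  by_cases hα : Fintype.card α ≤ 1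
  · exact hα.trans Fintype.card_pos
  have hS : ((univ : Finset α).erase a).Nonempty := by
    rw [← card_pos, card_erase_of_mem (mem_univ a), card_univ]
    omega
  have hlt := h _ hS (ne_of_mem_of_not_mem' (mem_univ a) (notMem_erase a univ)).symm
  rw [card_erase_of_mem (mem_univ a), card_univ] at hlt
  have := card_le_univ (N ((univ : Finset α).erase a))
  omega

theorem biUnion_update_erase_of_notMem {α β : Type*} [DecidableEq β] (t : α → Finset β)
    {x₀ : α} (y₀ : β) {s : Finset α} (hs : x₀ ∉ s) :
    s.biUnion (Function.update (fun x => (t x).erase y₀) x₀ {y₀}) =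
      (s.biUnion t).erase y₀ := by
  rw [biUnion_congr rfl fun x hx =>
    Function.update_of_ne (ne_of_mem_of_not_mem hx hs) _ _]
  ext y
  simp only [mem_biUnion, mem_erase]
  grind

theorem exists_injective_mem_of_card_lt_biUnion_card {α β : Type*} [DecidableEq β]
    (t : α → Finset β) {x₀ : α} {y₀ : β} (hy₀ : y₀ ∈ t x₀)
    (h : ∀ s : Finset α, s.Nonempty → x₀ ∉ s → #s < #(s.biUnion t)) :
    ∃ f : α → β, Function.Injective f ∧ (∀ x, f x ∈ t x) ∧ f x₀ = y₀ := by
  set t' := Function.update (fun x => (t x).erase y₀) x₀ {y₀} with ht'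
  have hall_of_notMem : ∀ s : Finset α, x₀ ∉ s → #s ≤ #(s.biUnion t') := by
    intro s hs
    rw [biUnion_update_erase_of_notMem t y₀ hs]
    rcases s.eq_empty_or_nonempty with rfl | hne
    · simp
    · have := h s hne hs
      have := pred_card_le_card_erase (s := s.biUnion t) (a := y₀)
      omega
  have hall : ∀ s : Finset α, #s ≤ #(s.biUnion t') := by
    intro s
    by_cases hx₀ : x₀ ∈ s
    · have hy₀ : y₀ ∉ (s.erase x₀).biUnion t' := by
        rw [biUnion_update_erase_of_notMem t y₀ (notMem_erase x₀ s)]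
        exact notMem_erase y₀ _
      have hsub : insert y₀ ((s.erase x₀).biUnion t') ⊆ s.biUnion t' :=
        insert_subset (mem_biUnion.2 ⟨x₀, hx₀, by simp [ht']⟩)
          (biUnion_subset_biUnion_of_subset_left t' (erase_subset x₀ s))
      calc #s = #(s.erase x₀) + 1 := (card_erase_add_one hx₀).symm
        _ ≤ #((s.erase x₀).biUnion t') + 1 :=
          Nat.add_le_add_right (hall_of_notMem _ (notMem_erase x₀ s)) 1
        _ = #(insert y₀ ((s.erase x₀).biUnion t')) := (card_insert_of_notMem hy₀).symm
        _ ≤ #(s.biUnion t') := card_le_card hsub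
    · exact hall_of_notMem s hx₀
  obtain ⟨f, hf_inj, hf⟩ := (all_card_le_biUnion_card_iff_exists_injective t').1 hall
  have hf₀ : f x₀ = y₀ := by simpa [ht'] using hf x₀
  refine ⟨f, hf_inj, fun x => ?_, hf₀⟩
  by_cases hx : x = x₀
  · subst hx
    rwa [hf₀]
  · have hfx := hf x
    rw [ht', Function.update_of_ne hx] at hfx
    exact mem_of_mem_erase hfx

section Multigraph

variable {B W E : Type*} [Fintype B] (b : E → B) (w : E → W)

theorem isPerfectMatching_image {g : B → E} (hb : ∀ x, b (g x) = x)
    (hw : Function.Bijective (w ∘ g)) : IsPerfectMatching b w (univ.image g) := by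
  refine ⟨fun x => ⟨g x, ⟨mem_image_of_mem g (mem_univ x), hb x⟩, ?_⟩, fun y => ?_⟩
  · rintro _ ⟨hD, rfl⟩
    obtain ⟨x', -, rfl⟩ := mem_image.1 hD
    rw [hb]
  · obtain ⟨x, hx⟩ := hw.2 y
    refine ⟨g x, ⟨mem_image_of_mem g (mem_univ x), hx⟩, ?_⟩
    rintro _ ⟨hD, rfl⟩
    obtain ⟨x', -, rfl⟩ := mem_image.1 hD
    exact congrArg g (hw.1 hx).symm

theorem exists_isPerfectMatching_mem_of_bijective (e : E) {f : B → W}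
    (hf : Function.Bijective f) (hadj : ∀ x, ∃ e', b e' = x ∧ w e' = f x)
    (he : f (b e) = w e) : ∃ D : Finset E, IsPerfectMatching b w D ∧ e ∈ D := by
  choose g hgb hgw using hadj
  set g' := Function.update g (b e) e
  have hb' : ∀ x, b (g' x) = x := by
    intro x
    by_cases hx : x = b e
    · simp [g', hx]
    · simp [g', hx, hgb]
  have hw' : w ∘ g' = f := by
    ext x
    by_cases hx : x = b e
    · simp [g', hx, he]
    · simp [g', hx, hgw]
  refine ⟨univ.image g', isPerfectMatching_image b w hb' (hw' ▸ hf), ?_⟩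
  simpa [g'] using mem_image_of_mem g' (mem_univ (b e))

end Multigraph

theorem nondegenerate_of_strong_marriage_general
    {B W E : Type*} [Fintype B] [Fintype W] [Fintype E]
    (b : E → B) (w : E → W)
    (hB : ∀ S : Finset B, S.Nonempty → S ≠ univ →
      S.card < (univ.filter (fun y : W => ∃ e : E, b e ∈ S ∧ w e = y)).card)
    (hW : ∀ S : Finset W, S.Nonempty → S ≠ univ →
      S.card < (univ.filter (fun x : B => ∃ e : E, w e ∈ S ∧ b e = x)).card) :
    ∀ e : E, ∃ D : Finset E, IsPerfectMatching b w D ∧ e ∈ D := by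
  intro e
  have : Nonempty B := ⟨b e⟩
  have : Nonempty W := ⟨w e⟩
  set adj : B → Finset W := fun x => univ.filter fun y => ∃ e', b e' = x ∧ w e' = y
  have biUnion_adj : ∀ S : Finset B,
      S.biUnion adj = univ.filter (fun y => ∃ e', b e' ∈ S ∧ w e' = y) := by
    intro S
    ext y
    simp only [adj, mem_biUnion, mem_filter, mem_univ, true_and]
    exact ⟨fun ⟨_, hx, e', hb, hy⟩ => ⟨e', hb ▸ hx, hy⟩,
      fun ⟨e', hx, hy⟩ => ⟨_, hx, e', rfl, hy⟩⟩
  obtain ⟨f, hf_inj, hf_adj, hf_e⟩ := exists_injective_mem_of_card_lt_biUnion_card adj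
    (x₀ := b e) (y₀ := w e) (by simpa [adj] using ⟨e, rfl, rfl⟩)
    fun S hS he => biUnion_adj S ▸ hB S hS (ne_of_mem_of_not_mem' (mem_univ _) he).symm
  have hf_bij : f.Bijective := (Fintype.bijective_iff_injective_and_card f).2
    ⟨hf_inj, le_antisymm (Fintype.card_le_of_injective f hf_inj)
      (card_le_card_of_forall_card_lt _ hW)⟩
  exact exists_isPerfectMatching_mem_of_bijective b w e hf_bij
    (fun x => by simpa [adj] using hf_adj x) hf_e

/-- The strong marriage condition (every nonempty proper subset of black vertices is
joined to strictly more white vertices, and vice versa) implies non-degeneracy: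
every edge belongs to some perfect matching. -/
theorem nondegenerate_of_strong_marriage
    {B W E : Type*} [Fintype B] [Fintype W] [Fintype E]
    [Nonempty B] [Nonempty W]
    (b : E → B) (w : E → W)
    (hB : ∀ S : Finset B, S.Nonempty → S ≠ univ →
      S.card < (univ.filter (fun y : W => ∃ e : E, b e ∈ S ∧ w e = y)).card)
    (hW : ∀ S : Finset W, S.Nonempty → S ≠ univ →
      S.card < (univ.filter (fun x : B => ∃ e : E, w e ∈ S ∧ b e = x)).card) :
    ∀ e : E, ∃ D : Finset E, IsPerfectMatching b w D ∧ e ∈ D :=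
  nondegenerate_of_strong_marriage_general b w hB hW
end

section
/- Let (B, W, E, b, w) be a finite bipartite multigraph with B and W nonempty which is connected (any two vertices of B ⊔ W are joined by a finite path of edges). Then the multigraph is non-degenerate (every edge belongs to some perfect matching) if and only if it satisfies the strong marriage condition. -/
open Finset
open scoped Classical

/-- The simple graph on `B ⊕ W` associated to a bipartite multigraph: a black vertex
`x` and a white vertex `y` are adjacent iff some edge `e` has `b e = x` and `w e = y`. -/
def bipartiteGraph {B W E : Type*} (b : E → B) (w : E → W) : SimpleGraph (B ⊕ W) where
  Adj x y := (∃ e : E, x = Sum.inl (b e) ∧ y = Sum.inr (w e)) ∨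
    (∃ e : E, x = Sum.inr (w e) ∧ y = Sum.inl (b e))
  symm := by
    constructor
    rintro x y (⟨e, hx, hy⟩ | ⟨e, hx, hy⟩)
    · exact Or.inr ⟨e, hy, hx⟩
    · exact Or.inl ⟨e, hy, hx⟩
  loopless := by
    constructor
    rintro x (⟨e, hx, hy⟩ | ⟨e, hx, hy⟩) <;> subst hx <;> cases hy
/-!
If `|N(S)| = |S|` for some nonempty proper `S ⊆ B`, every perfect matching pairs `S` with `N(S)`,
so no edge from `N(S)` back to `B \ S` lies in a perfect matching; non-degeneracy thus makes
`S ∪ N(S)` closed under adjacency, which connectivity forbids.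

Conversely, the strict inequalities force `|B| = |W|`, and after deleting both endpoints of an
edge `e` they still leave Hall's condition intact (the deletion costs each `N(S)` at most one
vertex). A Hall matching of the rest, together with `e`, is a perfect matching through `e`.
-/

section StrongMarriage

variable {B W E : Type*}

noncomputable def nbhd [Fintype E] [Fintype W] (b : E → B) (w : E → W) (S : Finset B) :
    Finset W :=
  univ.filter fun y => ∃ e, b e ∈ S ∧ w e = y

@[simp]
lemma mem_nbhd [Fintype E] [Fintype W] {b : E → B} {w : E → W} {S : Finset B} {y : W} :
    y ∈ nbhd b w S ↔ ∃ e, b e ∈ S ∧ w e = y := by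
  simp [nbhd]

def StrictHall [Fintype B] [Fintype E] [Fintype W] (b : E → B) (w : E → W) : Prop :=
  ∀ S : Finset B, S.Nonempty → S ≠ univ → S.card < (nbhd b w S).card

def Nondegenerate (b : E → B) (w : E → W) : Prop :=
  ∀ e : E, ∃ D : Finset E, IsPerfectMatching b w D ∧ e ∈ D

lemma IsPerfectMatching.swap {b : E → B} {w : E → W} {D : Finset E}
    (h : IsPerfectMatching b w D) : IsPerfectMatching w b D := ⟨h.2, h.1⟩

lemma Nondegenerate.swap {b : E → B} {w : E → W} (h : Nondegenerate b w) :
    Nondegenerate w b := fun e => (h e).imp fun _ hD => ⟨hD.1.swap, hD.2⟩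

def bipartiteGraphSwap (b : E → B) (w : E → W) :
    bipartiteGraph b w ≃g bipartiteGraph w b where
  toEquiv := Equiv.sumComm B W
  map_rel_iff' := by
    rintro (x | y) (x' | y') <;> simp [bipartiteGraph, eq_comm]

lemma SimpleGraph.Connected.bipartiteGraph_swap {b : E → B} {w : E → W}
    (h : (bipartiteGraph b w).Connected) : (bipartiteGraph w b).Connected :=
  (bipartiteGraphSwap b w).connected_iff.mp h

section Matching

variable {b : E → B} {w : E → W} {D : Finset E}

lemma IsPerfectMatching.exists_partner (hD : IsPerfectMatching b w D) :
    ∃ m : B → E, (∀ x, m x ∈ D ∧ b (m x) = x) ∧ Function.Injective (w ∘ m) := by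
  choose m hmD hmb using fun x => (hD.1 x).exists
  refine ⟨m, fun x => ⟨hmD x, hmb x⟩, fun x x' hxx' => ?_⟩
  rw [← hmb x, ← hmb x', (hD.2 (w (m x))).unique ⟨hmD x, rfl⟩ ⟨hmD x', hxx'.symm⟩]

lemma isPerfectMatching_image_of_bijective [Fintype B] {g : B → E} (hb : ∀ x, b (g x) = x)
    (hw : Function.Bijective (w ∘ g)) : IsPerfectMatching b w (univ.image g) := by
  refine ⟨fun x => ⟨g x, ⟨mem_image_of_mem g (mem_univ x), hb x⟩, ?_⟩, fun y => ?_⟩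
  · rintro _ ⟨he, rfl⟩
    obtain ⟨x', -, rfl⟩ := mem_image.mp he
    rw [hb]
  · obtain ⟨x, rfl⟩ := hw.2 y
    refine ⟨g x, ⟨mem_image_of_mem g (mem_univ x), rfl⟩, ?_⟩
    rintro _ ⟨he, hwe⟩
    obtain ⟨x', -, rfl⟩ := mem_image.mp he
    rw [hw.1 hwe]

variable [Fintype E] [Fintype W]

lemma image_subset_nbhd {m : B → E} (hm : ∀ x, b (m x) = x) (S : Finset B) :
    S.image (w ∘ m) ⊆ nbhd b w S := by
  simp only [subset_iff, mem_image, mem_nbhd]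
  rintro _ ⟨x, hx, rfl⟩
  exact ⟨m x, by rwa [hm x], rfl⟩

lemma IsPerfectMatching.card_le_card_nbhd (hD : IsPerfectMatching b w D) (S : Finset B) :
    S.card ≤ (nbhd b w S).card := by
  obtain ⟨m, hm, hinj⟩ := hD.exists_partner
  rw [← card_image_of_injective S hinj]
  exact card_le_card (image_subset_nbhd (fun x => (hm x).2) S)

lemma IsPerfectMatching.mem_of_card_nbhd_le (hD : IsPerfectMatching b w D) {S : Finset B}
    (hS : (nbhd b w S).card ≤ S.card) {e : E} (he : e ∈ D) (hwe : w e ∈ nbhd b w S) :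
    b e ∈ S := by
  obtain ⟨m, hm, hinj⟩ := hD.exists_partner
  have heq : S.image (w ∘ m) = nbhd b w S :=
    eq_of_subset_of_card_le (image_subset_nbhd (fun x => (hm x).2) S)
      (by rwa [card_image_of_injective S hinj])
  obtain ⟨x, hx, hwx⟩ := mem_image.mp (heq ▸ hwe)
  rwa [(hD.2 (w e)).unique ⟨he, rfl⟩ ⟨(hm x).1, hwx⟩, (hm x).2]

end Matching

lemma eq_univ_of_forall_mem_iff_mem [Fintype B] {b : E → B} {w : E → W}
    (hconn : (bipartiteGraph b w).Connected) {S : Finset B} {T : Finset W}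
    (hST : ∀ e, b e ∈ S ↔ w e ∈ T) (hS : S.Nonempty) : S = univ := by
  let P : B ⊕ W → Prop := Sum.elim (· ∈ S) (· ∈ T)
  have hadj : ∀ {u v}, (bipartiteGraph b w).Adj u v → (P u ↔ P v) := by
    rintro u v (⟨e, rfl, rfl⟩ | ⟨e, rfl, rfl⟩)
    exacts [hST e, (hST e).symm]
  have hreach : ∀ {u v}, (bipartiteGraph b w).Reachable u v → (P u ↔ P v) := by
    rintro u v ⟨p⟩
    induction p with
    | nil => rfl
    | cons ha _ ih => exact (hadj ha).trans ih
  obtain ⟨x₀, hx₀⟩ := hS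
  exact eq_univ_of_forall fun x => (hreach (hconn.preconnected (.inl x₀) (.inl x))).mp hx₀

lemma Nondegenerate.strictHall [Fintype B] [Fintype E] [Fintype W] {b : E → B} {w : E → W}
    (hnd : Nondegenerate b w) (hconn : (bipartiteGraph b w).Connected) : StrictHall b w := by
  intro S hS hSu
  by_contra! hcard
  refine hSu (eq_univ_of_forall_mem_iff_mem hconn (T := nbhd b w S) (fun e => ?_) hS)
  obtain ⟨D, hD, he⟩ := hnd e
  exact ⟨fun h => mem_nbhd.2 ⟨e, h, rfl⟩, hD.mem_of_card_nbhd_le hcard he⟩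

section StrictHall

variable [Fintype B] [Fintype E] [Fintype W] {b : E → B} {w : E → W}

lemma StrictHall.card_le [Nonempty W] (h : StrictHall b w) :
    Fintype.card B ≤ Fintype.card W := by
  rcases le_or_gt (Fintype.card B) 1 with hB | hB
  · exact hB.trans Fintype.card_pos
  obtain ⟨x⟩ : Nonempty B := Fintype.card_pos_iff.mp (by omega)
  have hcard : (univ.erase x).card = Fintype.card B - 1 := by
    rw [card_erase_of_mem (mem_univ x), card_univ]
  have hlt := h (univ.erase x) (by rw [← card_pos]; omega)
    ((card_lt_iff_ne_univ _).mp (by omega))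
  have := card_le_univ (nbhd b w (univ.erase x))
  omega

lemma StrictHall.exists_injective_avoiding (h : StrictHall b w) (x₀ : B) (y₀ : W) :
    ∃ f : {x // x ≠ x₀} → W, Function.Injective f ∧
      ∀ x, f x ≠ y₀ ∧ ∃ e, b e = x ∧ w e = f x := by
  refine (Fintype.all_card_le_filter_rel_iff_exists_injective
    fun (x : {x // x ≠ x₀}) y => y ≠ y₀ ∧ ∃ e, b e = x ∧ w e = y).mp fun A => ?_
  rcases A.eq_empty_or_nonempty with rfl | hA
  · simp
  set S := A.map (Function.Embedding.subtype _)
  have hx₀ : x₀ ∉ S := by simp [S]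
  have hlt := h S hA.map fun hS => hx₀ (hS ▸ mem_univ x₀)
  have hsub : (nbhd b w S).erase y₀ ⊆
      ({y | ∃ x ∈ A, y ≠ y₀ ∧ ∃ e, b e = x ∧ w e = y} : Finset W) := by
    intro y
    simp only [mem_erase, mem_nbhd, mem_filter, mem_univ, true_and, S, mem_map]
    rintro ⟨hy, e, ⟨x, hx, hxe⟩, rfl⟩
    exact ⟨x, hx, hy, e, hxe.symm, rfl⟩
  have := card_le_card hsub
  have := pred_card_le_card_erase (s := nbhd b w S) (a := y₀)
  rw [card_map] at hlt
  omega

lemma StrictHall.exists_section_through (h : StrictHall b w) (e₀ : E) :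
    ∃ g : B → E, (∀ x, b (g x) = x) ∧ Function.Injective (w ∘ g) ∧ g (b e₀) = e₀ := by
  obtain ⟨f, hf, hfy⟩ := h.exists_injective_avoiding (b e₀) (w e₀)
  choose hne ε hεb hεw using hfy
  let g : B → E := fun x => if hx : x = b e₀ then e₀ else ε ⟨x, hx⟩
  have hwg : w ∘ g = fun x => if hx : x = b e₀ then w e₀ else f ⟨x, hx⟩ := by
    funext x
    simp only [g, Function.comp_apply, apply_dite w, hεw]
  refine ⟨g, fun x => ?_, hwg ▸ ?_, dif_pos rfl⟩
  · by_cases hx : x = b e₀ <;> simp [g, hx, hεb]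
  · exact Function.Injective.dite _ (f := fun _ => w e₀) (Function.injective_of_subsingleton _)
      hf fun {_ x' _ hx'} => (hne ⟨x', hx'⟩).symm

lemma StrictHall.nondegenerate [Nonempty B] [Nonempty W] (h : StrictHall b w)
    (h' : StrictHall w b) : Nondegenerate b w := by
  intro e₀
  obtain ⟨g, hb, hw, hg⟩ := h.exists_section_through e₀
  have hbij : Function.Bijective (w ∘ g) :=
    (Fintype.bijective_iff_injective_and_card _).mpr ⟨hw, le_antisymm h.card_le h'.card_le⟩
  exact ⟨_, isPerfectMatching_image_of_bijective hb hbij, hg ▸ mem_image_of_mem g (mem_univ _)⟩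

end StrictHall

end StrongMarriage

/-- For a connected finite bipartite multigraph with `B`, `W` nonempty, non-degeneracy
(every edge lies in a perfect matching) is equivalent to the strong marriage condition:
every nonempty proper subset of black vertices is joined to strictly more white
vertices, and vice versa. -/
theorem nondegenerate_iff_strong_marriage
    {B W E : Type*} [Fintype B] [Fintype W] [Fintype E]
    [Nonempty B] [Nonempty W]
    (b : E → B) (w : E → W)
    (hconn : (bipartiteGraph b w).Connected) :
    (∀ e : E, ∃ D : Finset E, IsPerfectMatching b w D ∧ e ∈ D) ↔
      ((∀ S : Finset B, S.Nonempty → S ≠ univ →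
          S.card < (univ.filter (fun y : W => ∃ e : E, b e ∈ S ∧ w e = y)).card) ∧
        (∀ S : Finset W, S.Nonempty → S ≠ univ →
          S.card < (univ.filter (fun x : B => ∃ e : E, w e ∈ S ∧ b e = x)).card)) :=
  ⟨fun (hnd : Nondegenerate b w) =>
      ⟨hnd.strictHall hconn, hnd.swap.strictHall hconn.bipartiteGraph_swap⟩,
    fun (⟨h, h'⟩ : StrictHall b w ∧ StrictHall w b) => h.nondegenerate h'⟩
end

section
/- Let V and A be finite sets with maps s, t : A → V such that the underlying graph is connected (the simple graph on V in which x ≠ y are adjacent iff some arrow a has {s(a), t(a)} = {x, y} is connected). Let ξ : A → ℝ satisfy ξ(a) > 0 for all a ∈ A, and define θ_ξ(v) = Σ_{a : t(a)=v} ξ(a) − Σ_{a : s(a)=v} ξ(a). Then for every nonempty proper subset S ⊊ V that is closed under arrows (i.e. for every a ∈ A, s(a) ∈ S implies t(a) ∈ S), one has Σ_{v ∈ S} θ_ξ(v) > 0. -/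
open Finset
open scoped Classical

/-- The underlying simple graph of a quiver `(V, A, s, t)`: distinct vertices `x, y`
are adjacent iff some arrow joins them (in either direction). -/
def quiverGraph {V A : Type*} (s t : A → V) : SimpleGraph V where
  Adj x y := x ≠ y ∧ ∃ a : A, (s a = x ∧ t a = y) ∨ (s a = y ∧ t a = x)
  symm := by
    constructor
    rintro x y ⟨hxy, a, (⟨h1, h2⟩ | ⟨h1, h2⟩)⟩
    · exact ⟨hxy.symm, a, Or.inr ⟨h1, h2⟩⟩
    · exact ⟨hxy.symm, a, Or.inl ⟨h1, h2⟩⟩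
  loopless := ⟨fun x h => h.1 rfl⟩

/-!
Summed over an arrow-closed set `S`, the contribution of each arrow with both ends in `S`
cancels, and no arrow leaves `S`; what remains is the total weight of the arrows entering `S`
from outside. Connectedness of the underlying graph provides at least one such arrow when `S`
is nonempty and proper.
-/

namespace quiverGraph

variable {V A : Type*} (s t : A → V)

lemma exists_arrow_across_of_connected (hconn : (quiverGraph s t).Connected) {S : Set V}
    {u w : V} (hu : u ∈ S) (hw : w ∉ S) :
    ∃ a : A, (s a ∈ S ∧ t a ∉ S) ∨ (t a ∈ S ∧ s a ∉ S) := by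
  obtain ⟨d, -, hd_fst, hd_snd⟩ := (hconn.preconnected u w).some.exists_boundary_dart S hu hw
  obtain ⟨-, a, ⟨hs, ht⟩ | ⟨hs, ht⟩⟩ := d.adj
  · exact ⟨a, Or.inl ⟨hs ▸ hd_fst, ht ▸ hd_snd⟩⟩
  · exact ⟨a, Or.inr ⟨ht ▸ hd_fst, hs ▸ hd_snd⟩⟩

lemma exists_arrow_into_of_connected (hconn : (quiverGraph s t).Connected) {S : Set V}
    (hSne : S.Nonempty) (hSuniv : S ≠ Set.univ) (hclosed : ∀ a : A, s a ∈ S → t a ∈ S) :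
    ∃ a : A, t a ∈ S ∧ s a ∉ S := by
  obtain ⟨u, hu⟩ := hSne
  obtain ⟨w, hw⟩ := (Set.ne_univ_iff_exists_notMem S).1 hSuniv
  obtain ⟨a, ⟨hs, ht⟩ | hin⟩ := exists_arrow_across_of_connected s t hconn hu hw
  · exact absurd (hclosed a hs) ht
  · exact ⟨a, hin⟩

end quiverGraph

section NetFlow

variable {V A M : Type*} [Fintype A] [AddCommGroup M] (s t : A → V)

lemma sum_inflow_sub_outflow_eq_sum_entering (ξ : A → M) (S : Finset V)
    (hclosed : ∀ a : A, s a ∈ S → t a ∈ S) :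
    ∑ v ∈ S, ((∑ a ∈ univ.filter (fun a => t a = v), ξ a) -
        (∑ a ∈ univ.filter (fun a => s a = v), ξ a)) =
      ∑ a ∈ univ.filter (fun a => t a ∈ S ∧ s a ∉ S), ξ a := by
  have hsub : univ.filter (fun a => s a ∈ S) ⊆ univ.filter (fun a => t a ∈ S) :=
    monotone_filter_right _ fun a _ => hclosed a
  have hentering : univ.filter (fun a => t a ∈ S) \ univ.filter (fun a => s a ∈ S) =
      univ.filter (fun a => t a ∈ S ∧ s a ∉ S) := by
    rw [← filter_and_not]
  rw [sum_sub_distrib, sum_fiberwise_eq_sum_filter univ S t ξ,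
    sum_fiberwise_eq_sum_filter univ S s ξ, ← sum_sdiff hsub, add_sub_cancel_right, hentering]

end NetFlow

/-- For a finite quiver with connected underlying graph and positive weights
`ξ : A → ℝ` on the arrows, the stability parameter
`θ_ξ(v) = Σ_{t(a)=v} ξ(a) − Σ_{s(a)=v} ξ(a)` is strictly positive when summed over any
nonempty proper subset `S ⊊ V` of vertices closed under the arrows. -/
theorem theta_pos_on_arrow_closed_subsets
    {V A : Type*} [Fintype V] [Fintype A]
    (s t : A → V)
    (hconn : (quiverGraph s t).Connected)
    (ξ : A → ℝ) (hξ : ∀ a : A, 0 < ξ a) :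
    ∀ S : Finset V, S.Nonempty → S ≠ univ → (∀ a : A, s a ∈ S → t a ∈ S) →
      0 < ∑ v ∈ S, ((∑ a ∈ univ.filter (fun a => t a = v), ξ a) -
          (∑ a ∈ univ.filter (fun a => s a = v), ξ a)) := by
  intro S hSne hSuniv hclosed
  obtain ⟨a, hta, hsa⟩ := quiverGraph.exists_arrow_into_of_connected s t hconn
    (S := (S : Set V)) hSne (by simpa using hSuniv) hclosed
  rw [sum_inflow_sub_outflow_eq_sum_entering s t ξ S hclosed]
  exact sum_pos' (fun b _ => (hξ b).le) ⟨a, by simpa using ⟨hta, hsa⟩, hξ a⟩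
end

section
/- Let V and A be finite sets with maps s, t : A → V, and suppose that for every nonempty proper subset S ⊊ V there exists an arrow a ∈ A with exactly one of s(a), t(a) belonging to S. Define, for ξ : A → ℚ, θ_ξ(v) = Σ_{a : t(a)=v} ξ(a) − Σ_{a : s(a)=v} ξ(a). Then there exists ξ : A → ℚ with ξ(a) > 0 for all a ∈ A such that for every nonempty proper subset S ⊊ V one has Σ_{v ∈ S} θ_ξ(v) ≠ 0. -/
open Finset
open scoped Classical

/-- Genericity of stability parameters: if for every nonempty proper subset `S ⊊ V`
some arrow crosses the boundary of `S` (exactly one endpoint in `S`), then there are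
positive rational weights `ξ` on the arrows such that the parameter
`θ_ξ(v) = Σ_{t(a)=v} ξ(a) − Σ_{s(a)=v} ξ(a)` has nonzero sum over every nonempty
proper subset `S ⊊ V`. -/
theorem exists_generic_positive_weights
    {V A : Type*} [Fintype V] [Fintype A]
    (s t : A → V)
    (hcut : ∀ S : Finset V, S.Nonempty → S ≠ univ →
      ∃ a : A, Xor' (s a ∈ S) (t a ∈ S)) :
    ∃ ξ : A → ℚ, (∀ a : A, 0 < ξ a) ∧
      ∀ S : Finset V, S.Nonempty → S ≠ univ →
        (∑ v ∈ S, ((∑ a ∈ univ.filter (fun a => t a = v), ξ a) -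
            (∑ a ∈ univ.filter (fun a => s a = v), ξ a))) ≠ 0 := by
  -- coefficient of arrow `a` for subset `S`
  set c : Finset V → A → ℚ := fun S a =>
    (if t a ∈ S then (1:ℚ) else 0) - (if s a ∈ S then (1:ℚ) else 0) with hc
  -- the key rewriting: the statement's sum equals `∑ a, c S a * ξ a`
  have key : ∀ (ξ : A → ℚ) (S : Finset V),
      (∑ v ∈ S, ((∑ a ∈ univ.filter (fun a => t a = v), ξ a) -
          (∑ a ∈ univ.filter (fun a => s a = v), ξ a)))
        = ∑ a : A, c S a * ξ a := by
    intro ξ S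
    have ht : ∀ f : A → V, (∑ v ∈ S, ∑ a ∈ univ.filter (fun a => f a = v), ξ a)
        = ∑ a : A, (if f a ∈ S then ξ a else 0) := by
      intro f
      simp only [Finset.sum_filter]
      rw [Finset.sum_comm]
      refine Finset.sum_congr rfl fun a _ => ?_
      exact Finset.sum_ite_eq S (f a) (fun _ => ξ a)
    simp only [Finset.sum_sub_distrib, ht]
    rw [← Finset.sum_sub_distrib]
    refine Finset.sum_congr rfl fun a _ => ?_
    simp only [hc]
    by_cases h1 : t a ∈ S <;> by_cases h2 : s a ∈ S <;> simp [h1, h2]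
  -- injective exponents
  obtain ⟨e, he⟩ : ∃ e : A → ℕ, Function.Injective e := by
    obtain ⟨n, ⟨f⟩⟩ := Finite.exists_equiv_fin A
    exact ⟨fun a => f a, fun a b h => f.injective (Fin.val_injective h)⟩
  -- polynomials
  set P : Finset V → Polynomial ℚ := fun S =>
    ∑ a : A, Polynomial.C (c S a) * Polynomial.X ^ e a with hP
  have hPne : ∀ S : Finset V, S.Nonempty → S ≠ univ → P S ≠ 0 := by
    intro S hS hS' h0
    obtain ⟨a₀, ha₀⟩ := hcut S hS hS'
    have hco : (P S).coeff (e a₀) = c S a₀ := by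
      rw [hP]
      rw [Polynomial.finset_sum_coeff]
      rw [Finset.sum_eq_single a₀]
      · simp [Polynomial.coeff_C_mul, Polynomial.coeff_X_pow]
      · intro b _ hb
        simp [Polynomial.coeff_C_mul, Polynomial.coeff_X_pow,
          fun h => hb (he h), Ne.symm (fun h => hb (he h))]
      · simp
    have : c S a₀ ≠ 0 := by
      rcases ha₀ with ⟨h1, h2⟩ | ⟨h1, h2⟩ <;> simp [hc, h1, h2]
    rw [h0] at hco
    simp at hco
    exact this hco.symm
  -- the bad subsets
  set 𝒮 : Finset (Finset V) :=
    univ.filter (fun S => S.Nonempty ∧ S ≠ univ) with h𝒮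
  set Q : Polynomial ℚ := ∏ S ∈ 𝒮, P S with hQ
  have hQne : Q ≠ 0 := by
    rw [hQ]
    refine Finset.prod_ne_zero_iff.mpr fun S hS => ?_
    rw [h𝒮, Finset.mem_filter] at hS
    exact hPne S hS.2.1 hS.2.2
  -- choose ε > 0 not a root of Q
  have hroots : {x : ℚ | Q.IsRoot x}.Finite := Polynomial.finite_setOf_isRoot hQne
  have hIoi : (Set.Ioi (0:ℚ)).Infinite := Set.Ioi_infinite 0
  obtain ⟨ε, hε, hεroot⟩ := hIoi.exists_notMem_finite hroots
  replace hε : (0:ℚ) < ε := hε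
  refine ⟨fun a => ε ^ e a, fun a => pow_pos hε _, fun S hS hS' => ?_⟩
  rw [key]
  have hPeval : (P S).eval ε = ∑ a : A, c S a * ε ^ e a := by
    simp [hP, Polynomial.eval_finset_sum]
  have hQeval : Q.eval ε ≠ 0 := hεroot
  rw [hQ, Polynomial.eval_prod] at hQeval
  have := Finset.prod_ne_zero_iff.mp hQeval S
    (by rw [h𝒮]; simp [hS, hS'])
  rw [hPeval] at this
  exact this
end

section
/- The set of points (t₁, t₂, t₃, t₄) ∈ ℂ⁴ satisfying the four equations t₃ = t₂t₃t₄, t₁ = t₄t₁t₂, t₄ = t₃t₄t₁ and t₂ = t₁t₂t₃ is exactly the union of the single point {(0, 0, 0, 0)} and the set {(t₁, t₂, t₃, t₄) ∈ ℂ⁴ : t₁t₃ = 1 and t₂t₄ = 1}. -/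
/-- If `a ≠ 0` and the equations hold, then `a*c = 1` and `b*d = 1`. -/
lemma quadrivalent_aux {a b c d : ℂ} (ha : a ≠ 0)
    (h2 : a = d * a * b) (h3 : d = c * d * a) : a * c = 1 ∧ b * d = 1 := by
  have hdb : d * b = 1 := by
    have : a * (d * b) = a * 1 := by linear_combination -h2
    exact mul_left_cancel₀ ha this
  have hd : d ≠ 0 := left_ne_zero_of_mul_eq_one hdb
  have hca : c * a = 1 := by
    have : d * (c * a) = d * 1 := by linear_combination -h3
    exact mul_left_cancel₀ hd this
  exact ⟨by linear_combination hca, by linear_combination hdb⟩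

/-- The solution set in `ℂ⁴` of the equations `t₃ = t₂t₃t₄`, `t₁ = t₄t₁t₂`,
`t₄ = t₃t₄t₁`, `t₂ = t₁t₂t₃` is exactly the union of the origin and the
two-dimensional torus `{t₁t₃ = 1, t₂t₄ = 1}`. -/
theorem quadrivalent_chart_equations :
    {p : ℂ × ℂ × ℂ × ℂ |
        p.2.2.1 = p.2.1 * p.2.2.1 * p.2.2.2 ∧
        p.1 = p.2.2.2 * p.1 * p.2.1 ∧
        p.2.2.2 = p.2.2.1 * p.2.2.2 * p.1 ∧
        p.2.1 = p.1 * p.2.1 * p.2.2.1} =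
      {((0 : ℂ), (0 : ℂ), (0 : ℂ), (0 : ℂ))} ∪
        {p : ℂ × ℂ × ℂ × ℂ | p.1 * p.2.2.1 = 1 ∧ p.2.1 * p.2.2.2 = 1} := by
  ext ⟨a, b, c, d⟩
  simp only [Set.mem_setOf_eq, Set.mem_union, Set.mem_singleton_iff, Prod.mk.injEq]
  constructor
  · rintro ⟨h1, h2, h3, h4⟩
    by_cases ha : a = 0
    · by_cases hc : c = 0
      · left
        subst ha hc
        constructor
        · rfl
        refine ⟨by simpa using h4, rfl, by simpa using h3⟩
      · -- c ≠ 0 : from h1, b*d = 1, hence b ≠ 0, then from h4, a*c = 1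
        have hbd : b * d = 1 := by
          have : c * (b * d) = c * 1 := by linear_combination -h1
          exact mul_left_cancel₀ hc this
        have hb : b ≠ 0 := left_ne_zero_of_mul_eq_one hbd
        have hac : a * c = 1 := by
          have : b * (a * c) = b * 1 := by linear_combination -h4
          exact mul_left_cancel₀ hb this
        exact Or.inr ⟨hac, hbd⟩
    · exact Or.inr (quadrivalent_aux ha h2 h3)
  · rintro (⟨rfl, rfl, rfl, rfl⟩ | ⟨hac, hbd⟩)
    · norm_num
    · refine ⟨by linear_combination -c * hbd, by linear_combination -a * hbd,
        by linear_combination -d * hac, by linear_combination -b * hac⟩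
end

section
/- The set of points (t₁, t₂, t₃, t₄, t₅, t₆) ∈ ℂ⁶ satisfying the six equations t₁ = t₅t₆, t₂ = t₆t₄, t₃ = t₄t₅, t₄ = t₂t₃, t₅ = t₃t₁ and t₆ = t₁t₂ is exactly the union of the single point {(0, 0, 0, 0, 0, 0)} and the set {(t₁, …, t₆) ∈ ℂ⁶ : t₁t₂t₃ = 1, t₄ = t₂t₃, t₅ = t₃t₁ and t₆ = t₁t₂}. -/
/-- The solution set in `ℂ⁶` of the equations `t₁ = t₅t₆`, `t₂ = t₆t₄`, `t₃ = t₄t₅`,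
`t₄ = t₂t₃`, `t₅ = t₃t₁`, `t₆ = t₁t₂` is exactly the union of the origin and the
two-dimensional torus `{t₁t₂t₃ = 1, t₄ = t₂t₃, t₅ = t₃t₁, t₆ = t₁t₂}`. -/
theorem trivalent_chart_equations :
    ∀ t₁ t₂ t₃ t₄ t₅ t₆ : ℂ,
      (t₁ = t₅ * t₆ ∧ t₂ = t₆ * t₄ ∧ t₃ = t₄ * t₅ ∧
        t₄ = t₂ * t₃ ∧ t₅ = t₃ * t₁ ∧ t₆ = t₁ * t₂) ↔
      ((t₁, t₂, t₃, t₄, t₅, t₆) = ((0 : ℂ), (0 : ℂ), (0 : ℂ), (0 : ℂ), (0 : ℂ), (0 : ℂ)) ∨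
        (t₁ * t₂ * t₃ = 1 ∧ t₄ = t₂ * t₃ ∧ t₅ = t₃ * t₁ ∧ t₆ = t₁ * t₂)) := by
  intro t₁ t₂ t₃ t₄ t₅ t₆
  constructor
  · rintro ⟨h1, h2, h3, h4, h5, h6⟩
    by_cases hp : t₁ * t₂ * t₃ = 1
    · exact Or.inr ⟨hp, h4, h5, h6⟩
    · left
      have e1 : t₁ * (1 - t₁ * t₂ * t₃) = 0 := by linear_combination h1 + t₆ * h5 + t₃ * t₁ * h6
      have e2 : t₂ * (1 - t₁ * t₂ * t₃) = 0 := by linear_combination h2 + t₄ * h6 + t₁ * t₂ * h4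
      have e3 : t₃ * (1 - t₁ * t₂ * t₃) = 0 := by linear_combination h3 + t₅ * h4 + t₂ * t₃ * h5
      have hq : (1 : ℂ) - t₁ * t₂ * t₃ ≠ 0 := fun h => hp (by linear_combination -h)
      have z1 : t₁ = 0 := by rcases mul_eq_zero.mp e1 with h | h; exact h; exact absurd h hq
      have z2 : t₂ = 0 := by rcases mul_eq_zero.mp e2 with h | h; exact h; exact absurd h hq
      have z3 : t₃ = 0 := by rcases mul_eq_zero.mp e3 with h | h; exact h; exact absurd h hq
      simp [z1, z2, z3, h4, h5, h6]
  · rintro (h | ⟨hp, h4, h5, h6⟩)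
    · simp_all
    · refine ⟨?_, ?_, ?_, h4, h5, h6⟩
      · linear_combination -t₁ * hp - t₆ * h5 - t₃ * t₁ * h6
      · linear_combination -t₂ * hp - t₄ * h6 - t₁ * t₂ * h4
      · linear_combination -t₃ * hp - t₅ * h4 - t₂ * t₃ * h5
end
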